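/- Let c_{crit} = \exp(-\pi/\sqrt{3}). For every c with 0 < c < c_{crit}, there exists a unique k \in (0, 1/4) such that c^{2k}/(2\cos((2k+1)\pi/3)) = 1. -/

import Mathlib

/-!
Clearing the positive denominator, the equation becomes `g k = 0` for
`g k = c ^ (2k) - 2 cos ((2k + 1)π/3)`. On `[0, 1/4]` this `g` is strictly convex (a convex
exponential minus a strictly concave cosine), vanishes at `0`, is positive at `1/4`, and has slope
`2 (log c + π/√3)` at `0`, which is negative exactly when `c < c_crit`. So `g` dips below zero,
and strict convexity allows only one return to zero before `1/4`.
-/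

open Real Set

theorem StrictConcaveOn.comp_mul_add {g : ℝ → ℝ} {s : Set ℝ} (hg : StrictConcaveOn ℝ s g)
    {a : ℝ} (ha : a ≠ 0) (b : ℝ) :
    StrictConcaveOn ℝ ((a * · + b) ⁻¹' s) (fun x => g (a * x + b)) := by
  refine ⟨hg.1.affine_preimage ((a • AffineMap.id ℝ ℝ) + AffineMap.const ℝ ℝ b), ?_⟩
  intro x hx y hy hxy μ ν hμ hν hμν
  have hne : a * x + b ≠ a * y + b := by simpa [ha] using hxy
  convert hg.2 hx hy hne hμ hν hμν using 2
  simp only [smul_eq_mul]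
  linear_combination b * hμν.symm

theorem StrictConcaveOn.const_mul {E : Type*} [AddCommMonoid E] [Module ℝ E] {s : Set E}
    {f : E → ℝ} (hf : StrictConcaveOn ℝ s f) {r : ℝ} (hr : 0 < r) :
    StrictConcaveOn ℝ s (fun x => r * f x) := by
  refine ⟨hf.1, fun x hx y hy hxy a b ha hb hab => ?_⟩
  have := mul_lt_mul_of_pos_left (hf.2 hx hy hxy ha hb hab) hr
  simp only [smul_eq_mul] at this ⊢
  linarith

theorem exists_lt_of_hasDerivWithinAt_Ici_neg {f : ℝ → ℝ} {f' a b : ℝ}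
    (hf : HasDerivWithinAt f f' (Ici a) a) (hf' : f' < 0) (hab : a < b) :
    ∃ x ∈ Ioo a b, f x < f a := by
  obtain ⟨x, hslope, hx⟩ :=
    ((hf.liminf_right_slope_le hf').and_eventually (Ioo_mem_nhdsGT hab)).exists
  refine ⟨x, hx, ?_⟩
  rw [slope_def_field, div_neg_iff] at hslope
  rcases hslope with ⟨_, hneg⟩ | ⟨hneg, _⟩
  · linarith [hx.1]
  · linarith

theorem StrictConvexOn.existsUnique_zero_Ioo {f : ℝ → ℝ} {f' a b : ℝ}
    (hconv : StrictConvexOn ℝ (Icc a b) f) (hcont : ContinuousOn f (Icc a b)) (hab : a < b)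
    (ha : f a = 0) (hf : HasDerivWithinAt f f' (Ici a) a) (hf' : f' < 0) (hb : 0 < f b) :
    ∃! x, x ∈ Ioo a b ∧ f x = 0 := by
  obtain ⟨t, ht, hft⟩ := exists_lt_of_hasDerivWithinAt_Ici_neg hf hf' hab
  obtain ⟨x, hxt, hfx⟩ := intermediate_value_Ioo ht.2.le
    (hcont.mono (Icc_subset_Icc_left ht.1.le)) ⟨ha ▸ hft, hb⟩
  have hx : x ∈ Ioo a b := ⟨ht.1.trans hxt.1, hxt.2⟩
  have neg_before_zero {y z : ℝ} (hy : y ∈ Ioo a z) (hz : z ∈ Ioo a b) (hfz : f z = 0) :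
      f y < 0 := by
    have := hconv.lt_on_openSegment (left_mem_Icc.2 hab.le) (Ioo_subset_Icc_self hz) hz.1.ne
      ((openSegment_eq_Ioo hz.1).symm ▸ hy)
    rwa [ha, hfz, max_self] at this
  refine ⟨x, ⟨hx, hfx⟩, ?_⟩
  rintro y ⟨hy, hfy⟩
  rcases lt_trichotomy y x with hyx | rfl | hxy
  · exact absurd hfy (neg_before_zero ⟨hy.1, hyx⟩ hx hfx).ne
  · rfl
  · exact absurd hfx (neg_before_zero ⟨hx.1, hxy⟩ hy hfy).ne

noncomputable def momentGap (c k : ℝ) : ℝ := c ^ (2 * k) - 2 * cos ((2 * k + 1) * π / 3)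

theorem momentGap_zero (c : ℝ) : momentGap c 0 = 0 := by
  simp [momentGap]

theorem momentGap_quarter_pos {c : ℝ} (hc : 0 < c) : 0 < momentGap c (1 / 4) := by
  have : (2 * (1 / 4) + 1) * π / 3 = π / 2 := by ring
  rw [momentGap, this, cos_pi_div_two, mul_zero, sub_zero]
  exact rpow_pos_of_pos hc _

theorem continuous_momentGap {c : ℝ} (hc : 0 < c) : Continuous (momentGap c) := by
  unfold momentGap
  fun_prop (disch := positivity)

theorem hasDerivAt_momentGap_zero {c : ℝ} (hc : 0 < c) :
    HasDerivAt (momentGap c) (2 * (log c + π / √3)) 0 := by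
  have hlin : HasDerivAt (fun k : ℝ => 2 * k) 2 0 := by
    simpa using (hasDerivAt_id (0 : ℝ)).const_mul 2
  have hangle : HasDerivAt (fun k : ℝ => (2 * k + 1) * π / 3) (2 * π / 3) 0 := by
    simpa using (((hasDerivAt_id (0 : ℝ)).const_mul 2).add_const 1).mul_const π |>.div_const 3
  refine ((hlin.const_rpow hc).sub (hangle.cos.const_mul 2)).congr_deriv ?_
  have : (2 * 0 + 1) * π / 3 = π / 3 := by ring
  rw [this, sin_pi_div_three]
  field_simp
  rw [mul_zero, rpow_zero]
  linear_combination π * mul_self_sqrt (show (0 : ℝ) ≤ 3 by norm_num)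

theorem strictConvexOn_momentGap {c : ℝ} (hc : 0 < c) :
    StrictConvexOn ℝ (Icc 0 (1 / 4)) (momentGap c) := by
  have hexp : ConvexOn ℝ (Icc 0 (1 / 4)) (fun k : ℝ => c ^ (2 * k)) := by
    have := (convexOn_rpow_left (rpow_pos_of_pos hc 2)).subset (subset_univ (Icc (0 : ℝ) (1 / 4)))
      (convex_Icc _ _)
    simpa only [← rpow_mul hc.le] using this
  have hcos : StrictConcaveOn ℝ (Icc 0 (1 / 4))
      (fun k : ℝ => 2 * cos ((2 * k + 1) * π / 3)) := by
    have hangle (k : ℝ) : (2 * k + 1) * π / 3 = 2 * π / 3 * k + π / 3 := by ring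
    simp only [hangle]
    refine ((strictConcaveOn_cos_Icc.comp_mul_add (by positivity) _).subset ?_
      (convex_Icc _ _)).const_mul two_pos
    intro k hk
    constructor <;> nlinarith [pi_pos, hk.1, hk.2]
  have hsum : momentGap c =
      (fun k : ℝ => c ^ (2 * k)) + -(fun k : ℝ => 2 * cos ((2 * k + 1) * π / 3)) := by
    ext k
    simp [momentGap, sub_eq_add_neg]
  rw [hsum]
  exact hexp.add_strictConvexOn hcos.neg

theorem stmt_6 (c : ℝ) (hc0 : 0 < c) (hc : c < Real.exp (-π / Real.sqrt 3)) :
    ∃! k : ℝ, k ∈ Set.Ioo (0:ℝ) (1/4) ∧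
      c ^ (2 * k) / (2 * Real.cos ((2 * k + 1) * π / 3)) = 1 := by
  have hslope : 2 * (log c + π / √3) < 0 := by
    have := log_lt_log hc0 hc
    rw [log_exp, neg_div] at this
    linarith
  have hzero := (strictConvexOn_momentGap hc0).existsUnique_zero_Ioo
    (continuous_momentGap hc0).continuousOn (by norm_num) (momentGap_zero c)
    (hasDerivAt_momentGap_zero hc0).hasDerivWithinAt hslope (momentGap_quarter_pos hc0)
  refine (existsUnique_congr fun k => and_congr_right fun hk => ?_).1 hzero
  have hcos : 0 < cos ((2 * k + 1) * π / 3) := by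
    apply cos_pos_of_mem_Ioo
    constructor <;> nlinarith [pi_pos, hk.1, hk.2]
  rw [div_eq_one_iff_eq (by positivity), momentGap, sub_eq_zero]
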